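/- Every ω-splitting family is a Miller tree-splitting family, and every Miller tree-splitting family is a splitting family. -/

import Mathlib

/-- The restriction `f↾n` of `f : ω → ω`, as a finite sequence. -/
def res (f : ℕ → ℕ) (n : ℕ) : List ℕ := (List.range n).map f

/-- A tree on `ω`: a set of finite sequences closed under initial segments. -/
def IsTree (T : Set (List ℕ)) : Prop := ∀ s ∈ T, ∀ t, t <+: s → t ∈ T

/-- The successor set `suc_T(s) = {n : s⌢n ∈ T}`. -/
def sucT (T : Set (List ℕ)) (s : List ℕ) : Set ℕ := {n | s ++ [n] ∈ T}

/-- `f ∈ [T]` is a branch of `T`. -/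
def IsBranch (T : Set (List ℕ)) (f : ℕ → ℕ) : Prop := ∀ n, res f n ∈ T

/-- A Miller (superperfect) tree: a nonempty tree of strictly increasing sequences in
which every node extends to an infinitely-splitting node. -/
def IsMiller (p : Set (List ℕ)) : Prop :=
  p.Nonempty ∧ IsTree p ∧ (∀ s ∈ p, List.Chain' (· < ·) s) ∧
    ∀ s ∈ p, ∃ t ∈ p, s <+: t ∧ (sucT p t).Infinite

/-- The (infinitely-)splitting nodes of `p`. -/
def SplitNodes (p : Set (List ℕ)) : Set (List ℕ) := {s | s ∈ p ∧ (sucT p s).Infinite}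

/-- `Sp(p,f) = {f(n) : f↾n ∈ Split(p)}`. -/
def Sp (p : Set (List ℕ)) (f : ℕ → ℕ) : Set ℕ :=
  {m | ∃ n, res f n ∈ SplitNodes p ∧ f n = m}

/-- `[p]_split = {Sp(p,f) : f ∈ [p]}`. -/
def splitSets (p : Set (List ℕ)) : Set (Set ℕ) := {X | ∃ f, IsBranch p f ∧ X = Sp p f}

/-- `S` tree-splits the Miller tree `p`. -/
def TreeSplits (S : Set ℕ) (p : Set (List ℕ)) : Prop :=
  (∃ q, IsMiller q ∧ q ⊆ p ∧ ∀ X ∈ splitSets q, X.Infinite ∧ X ⊆ S) ∧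
  (∃ q, IsMiller q ∧ q ⊆ p ∧ ∀ X ∈ splitSets q, X.Infinite ∧ X ⊆ Set.univ \ S)

/-- `𝒮` is an `ω`-splitting family. -/
def IsOmegaSplitting (𝒮 : Set (Set ℕ)) : Prop :=
  ∀ X : ℕ → Set ℕ, (∀ n, (X n).Infinite) →
    ∃ S ∈ 𝒮, ∀ n, (X n ∩ S).Infinite ∧ (X n \ S).Infinite

/-- `𝒮` is a splitting family. -/
def IsSplittingFam (𝒮 : Set (Set ℕ)) : Prop :=
  ∀ X : Set ℕ, X.Infinite → ∃ S ∈ 𝒮, (X ∩ S).Infinite ∧ (X \ S).Infinite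


/-!
If `S` splits the successor set of every splitting node of a Miller tree `p` (there are only
countably many such nodes, so an `ω`-splitting family provides one), then for `A = S` and for
`A = ω ∖ S` a fusion inside `p` produces a Miller subtree: start at a splitting node, and
repeatedly step to a successor in `A` and then up to a splitting node of `p` above it. This
subtree branches only at the chosen splitting nodes and only into `A`, and each of its branches
passes through infinitely many of them, so all its split sets are infinite subsets of `A`.

Conversely, for infinite `X` the tree of strictly increasing sequences from `X` is Miller, and a
branch of each of the two subtrees given by tree-splitting it has an infinite split set inside
`X ∩ S`, resp. `X ∖ S`.
-/

section Forks

variable {α : Type*}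

lemma List.exists_fork_of_not_prefix : ∀ {l l' : List α}, ¬ l <+: l' → ¬ l' <+: l →
    ∃ d a a', a ≠ a' ∧ d ++ [a] <+: l ∧ d ++ [a'] <+: l'
  | [], _, h, _ => absurd List.nil_prefix h
  | _ :: _, [], _, h' => absurd List.nil_prefix h'
  | a :: l, a' :: l', h, h' => by
    by_cases ha : a = a'
    · subst ha
      obtain ⟨d, b, b', hb, hd, hd'⟩ := List.exists_fork_of_not_prefix
        (fun hl => h (by simpa using hl)) (fun hl => h' (by simpa using hl))
      exact ⟨a :: d, b, b', hb, by simpa using hd, by simpa using hd'⟩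
    · exact ⟨[], a, a', ha, by simp, by simp⟩

lemma List.eq_of_append_singleton_prefix {d l : List α} {a b : α}
    (ha : d ++ [a] <+: l) (hb : d ++ [b] <+: l) : a = b := by
  simpa using List.IsPrefix.eq_of_length (List.prefix_of_prefix_length_le ha hb (by simp))
    (by simp)

lemma List.fork_unique {l l' d e : List α} {a a' b b' : α}
    (hd : d ++ [a] <+: l) (hd' : d ++ [a'] <+: l') (ha : a ≠ a')
    (he : e ++ [b] <+: l) (he' : e ++ [b'] <+: l') (hb : b ≠ b') : d = e ∧ a = b := by
  have below : ∀ {d e : List α} {a a' b b' : α}, d ++ [a] <+: l → d ++ [a'] <+: l' →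
      e ++ [b] <+: l → e ++ [b'] <+: l' → d.length < e.length → a = a' :=
    fun hd hd' he he' hlt => List.eq_of_append_singleton_prefix
      (List.prefix_of_prefix_length_le hd ((List.prefix_append _ _).trans he) (by simpa))
      (List.prefix_of_prefix_length_le hd' ((List.prefix_append _ _).trans he') (by simpa))
  rcases lt_trichotomy d.length e.length with hlt | heq | hgt
  · exact absurd (below hd hd' he he' hlt) ha
  · have hde : d = e := List.IsPrefix.eq_of_length (List.prefix_of_prefix_length_le
      ((List.prefix_append _ _).trans hd) ((List.prefix_append _ _).trans he) heq.le) heq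
    subst hde
    exact ⟨rfl, List.eq_of_append_singleton_prefix hd he⟩
  · exact absurd (below he he' hd hd' hgt) hb

lemma List.IsPrefix.append_getElem_prefix {l l' : List α} (h : l <+: l')
    (hlt : l.length < l'.length) : l ++ [l'[l.length]] <+: l' := by
  obtain ⟨r, rfl⟩ := h
  cases r with
  | nil => simp at hlt
  | cons a r => simp

end Forks

lemma res_succ (f : ℕ → ℕ) (n : ℕ) : res f (n + 1) = res f n ++ [f n] := by
  simp [res, List.range_succ]

@[simp]
lemma length_res (f : ℕ → ℕ) (n : ℕ) : (res f n).length = n := by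
  simp [res]

lemma IsBranch.strictMono {q : Set (List ℕ)} {f : ℕ → ℕ}
    (hq : ∀ s ∈ q, List.IsChain (· < ·) s) (hf : IsBranch q f) : StrictMono f := by
  refine strictMono_nat_of_lt_succ fun n => ?_
  have h := hq _ (hf (n + 2))
  rw [res_succ, res_succ, List.append_assoc] at h
  simpa using (List.IsChain.right_of_append h)

lemma exists_branch_of_sucT_nonempty {T : Set (List ℕ)} (h₀ : [] ∈ T)
    (h : ∀ s ∈ T, (sucT T s).Nonempty) : ∃ f, IsBranch T f := by
  choose g hg using h
  let next : T → T := fun s => ⟨s.1 ++ [g s.1 s.2], hg s.1 s.2⟩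
  let node : ℕ → T := fun k => next^[k] ⟨[], h₀⟩
  have hres : ∀ n, res (fun k => g (node k).1 (node k).2) n = (node n).1 := by
    intro n
    induction n with
    | zero => rfl
    | succ n ih => rw [res_succ, ih]; simp [node, next, Function.iterate_succ_apply']
  exact ⟨_, fun n => hres n ▸ (node n).2⟩

namespace IsMiller

variable {p : Set (List ℕ)}

lemma nil_mem (hp : IsMiller p) : [] ∈ p :=
  hp.1.elim fun s hs => hp.2.1 s hs [] List.nil_prefix

lemma sucT_nonempty (hp : IsMiller p) {s : List ℕ} (hs : s ∈ p) : (sucT p s).Nonempty := by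
  obtain ⟨t, ht, hst, hinf⟩ := hp.2.2.2 s hs
  obtain ⟨n, hn⟩ := hinf.nonempty
  have hlt : s.length < (t ++ [n]).length := by simpa using Nat.lt_succ_of_le hst.length_le
  exact ⟨_, hp.2.1 _ hn _ ((hst.trans (List.prefix_append _ _)).append_getElem_prefix hlt)⟩

lemma exists_branch (hp : IsMiller p) : ∃ f, IsBranch p f :=
  exists_branch_of_sucT_nonempty hp.nil_mem fun _ => hp.sucT_nonempty

end IsMiller

namespace Miller

variable {p : Set (List ℕ)} (hp : IsMiller p)

open Classical in
noncomputable def splitExt (s : List ℕ) : List ℕ :=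
  if h : s ∈ p then (hp.2.2.2 s h).choose else []

lemma splitExt_spec {s : List ℕ} (hs : s ∈ p) :
    splitExt hp s ∈ SplitNodes p ∧ s <+: splitExt hp s := by
  obtain ⟨hmem, hpre, hinf⟩ := (hp.2.2.2 s hs).choose_spec
  rw [splitExt, dif_pos hs]
  exact ⟨⟨hmem, hinf⟩, hpre⟩

/-- A code `c` lists the successive choices made at splitting nodes: `codeNode []` is a fixed
splitting node of `p`, and `codeNode (c ++ [n])` a fixed splitting node above
`codeNode c ++ [n]`. -/
noncomputable def codeNode (c : List ℕ) : List ℕ :=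
  c.foldl (fun t n => splitExt hp (t ++ [n])) (splitExt hp [])

lemma codeNode_append_singleton (c : List ℕ) (n : ℕ) :
    codeNode hp (c ++ [n]) = splitExt hp (codeNode hp c ++ [n]) := by
  simp [codeNode, List.foldl_append]

def IsCode (A : Set ℕ) (c : List ℕ) : Prop :=
  ∀ d n, d ++ [n] <+: c → codeNode hp d ++ [n] ∈ p ∧ n ∈ A

def codeTree (A : Set ℕ) : Set (List ℕ) :=
  {s | ∃ c, IsCode hp A c ∧ s <+: codeNode hp c}

variable {hp} {A : Set ℕ}

lemma isCode_nil : IsCode hp A [] := fun d n h => by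
  simpa using h.length_le

lemma IsCode.of_prefix {c c' : List ℕ} (h : c <+: c') (hc' : IsCode hp A c') : IsCode hp A c :=
  fun d n hd => hc' d n (hd.trans h)

lemma IsCode.append_singleton {c : List ℕ} {n : ℕ} (hc : IsCode hp A c)
    (hmem : codeNode hp c ++ [n] ∈ p) (hn : n ∈ A) : IsCode hp A (c ++ [n]) := by
  intro d m hd
  rcases List.prefix_concat_iff.mp hd with h | h
  · obtain ⟨rfl, rfl⟩ : d = c ∧ m = n := by simpa using h
    exact ⟨hmem, hn⟩
  · exact hc d m h

lemma IsCode.codeNode_mem_splitNodes {c : List ℕ} (hc : IsCode hp A c) :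
    codeNode hp c ∈ SplitNodes p := by
  induction c using List.reverseRecOn with
  | nil => exact (splitExt_spec hp hp.nil_mem).1
  | append_singleton c n _ =>
    rw [codeNode_append_singleton]
    exact (splitExt_spec hp (hc c n (List.prefix_refl _)).1).1

lemma IsCode.append_singleton_prefix {c d : List ℕ} {n : ℕ} (hc : IsCode hp A c)
    (h : d ++ [n] <+: c) : codeNode hp d ++ [n] <+: codeNode hp (d ++ [n]) := by
  rw [codeNode_append_singleton]
  exact (splitExt_spec hp (hc d n h).1).2

lemma IsCode.codeNode_prefix {c c' : List ℕ} (hc' : IsCode hp A c') (h : c <+: c') :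
    codeNode hp c <+: codeNode hp c' := by
  induction c' using List.reverseRecOn with
  | nil => rw [List.prefix_nil.mp h]
  | append_singleton c' n ih =>
    rcases List.prefix_concat_iff.mp h with rfl | h
    · exact List.prefix_refl _
    · exact (ih (hc'.of_prefix (List.prefix_append _ _)) h).trans <| (List.prefix_append _ _).trans
        (hc'.append_singleton_prefix (List.prefix_refl _))

lemma IsCode.codeNode_append_singleton_prefix {c d : List ℕ} {n : ℕ} (hc : IsCode hp A c)
    (h : d ++ [n] <+: c) : codeNode hp d ++ [n] <+: codeNode hp c :=
  (hc.append_singleton_prefix h).trans (hc.codeNode_prefix h)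

lemma codeTree_subset : codeTree hp A ⊆ p := fun _ ⟨_, hc, hs⟩ =>
  hp.2.1 _ hc.codeNode_mem_splitNodes.1 _ hs

lemma IsCode.codeNode_mem_splitNodes_codeTree
    (hA : ∀ t ∈ SplitNodes p, (sucT p t ∩ A).Infinite) {c : List ℕ} (hc : IsCode hp A c) :
    codeNode hp c ∈ SplitNodes (codeTree hp A) := by
  refine ⟨⟨c, hc, List.prefix_refl _⟩, (hA _ hc.codeNode_mem_splitNodes).mono ?_⟩
  rintro n ⟨hmem, hn⟩
  have hcn := hc.append_singleton hmem hn
  exact ⟨c ++ [n], hcn, hcn.append_singleton_prefix (List.prefix_refl _)⟩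

lemma isMiller_codeTree (hA : ∀ t ∈ SplitNodes p, (sucT p t ∩ A).Infinite) :
    IsMiller (codeTree hp A) := by
  refine ⟨⟨_, [], isCode_nil, List.prefix_refl _⟩, fun s ⟨c, hc, hs⟩ t ht => ⟨c, hc, ht.trans hs⟩,
    fun s hs => hp.2.2.1 s (codeTree_subset hs), ?_⟩
  rintro s ⟨c, hc, hs⟩
  have hsplit := hc.codeNode_mem_splitNodes_codeTree hA
  exact ⟨_, hsplit.1, hs, hsplit.2⟩

/-- Two codes that are not prefixes of each other fork at a code `d`, and then their nodes fork
at `codeNode d`, so `codeNode d` is the only place where `codeTree` can branch. -/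
lemma eq_codeNode_of_fork {s : List ℕ} {m m' : ℕ} (h : s ++ [m] ∈ codeTree hp A)
    (h' : s ++ [m'] ∈ codeTree hp A) (hm : m ≠ m') :
    m ∈ A ∧ ∃ d, IsCode hp A d ∧ s = codeNode hp d := by
  obtain ⟨c, hc, hs⟩ := h
  obtain ⟨c', hc', hs'⟩ := h'
  obtain ⟨d, n, n', hn, hd, hd'⟩ := List.exists_fork_of_not_prefix
    (fun hcc => hm (List.eq_of_append_singleton_prefix (hs.trans (hc'.codeNode_prefix hcc)) hs'))
    (fun hcc => hm (List.eq_of_append_singleton_prefix hs (hs'.trans (hc.codeNode_prefix hcc))))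
  obtain ⟨rfl, rfl⟩ := List.fork_unique hs hs' hm (hc.codeNode_append_singleton_prefix hd)
    (hc'.codeNode_append_singleton_prefix hd') hn
  exact ⟨(hc d m hd).2, d, hc.of_prefix ((List.prefix_append _ _).trans hd), rfl⟩

lemma exists_ge_res_eq_codeNode {f : ℕ → ℕ} (hf : IsBranch (codeTree hp A) f) (n : ℕ) :
    ∃ m, n ≤ m ∧ ∃ d, IsCode hp A d ∧ res f m = codeNode hp d := by
  classical
  obtain ⟨c, hc, hn⟩ := hf n
  set L := (codeNode hp c).length with hL
  -- `k` is the last level at which the branch still follows `codeNode c`; if it leaves before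
  -- the end, it forks off `codeNode c` there, which can only happen at a code node.
  let P := fun k => res f k <+: codeNode hp c
  set k := Nat.findGreatest P L
  have hnL : n ≤ L := by simpa using hn.length_le
  have hk : P k := Nat.findGreatest_spec hnL hn
  have hkL : k ≤ L := Nat.findGreatest_le L
  rcases hkL.eq_or_lt with heq | hlt
  · exact ⟨k, Nat.le_findGreatest hnL hn, c, hc, hk.eq_of_length (by simp [heq, hL])⟩
  · have hlen : (res f k).length < (codeNode hp c).length := by simpa using hlt
    have hb := hk.append_getElem_prefix hlen
    have hfk : f k ≠ (codeNode hp c)[(res f k).length] := fun h =>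
      Nat.findGreatest_is_greatest (Nat.lt_succ_self k) hlt
        (show res f (k + 1) <+: _ by rw [res_succ, h]; exact hb)
    obtain ⟨-, hd⟩ := eq_codeNode_of_fork (res_succ f k ▸ hf (k + 1)) ⟨c, hc, hb⟩ hfk
    exact ⟨k, Nat.le_findGreatest hnL hn, hd⟩

lemma Sp_codeTree_subset {f : ℕ → ℕ} (hf : IsBranch (codeTree hp A) f) :
    Sp (codeTree hp A) f ⊆ A := by
  rintro _ ⟨n, hn, rfl⟩
  obtain ⟨m, hm⟩ := (hn.2.sdiff (Set.finite_singleton (f n))).nonempty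
  exact (eq_codeNode_of_fork (res_succ f n ▸ hf (n + 1)) hm.1 fun h => hm.2 h.symm).1

lemma Sp_codeTree_infinite (hA : ∀ t ∈ SplitNodes p, (sucT p t ∩ A).Infinite) {f : ℕ → ℕ}
    (hf : IsBranch (codeTree hp A) f) : (Sp (codeTree hp A) f).Infinite := by
  have hsplit : {n | res f n ∈ SplitNodes (codeTree hp A)}.Infinite :=
    Set.infinite_of_forall_exists_gt fun a => by
      obtain ⟨m, ham, d, hd, hm⟩ := exists_ge_res_eq_codeNode hf (a + 1)
      exact ⟨m, show res f m ∈ _ from hm ▸ hd.codeNode_mem_splitNodes_codeTree hA, ham⟩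
  exact hsplit.image (hf.strictMono fun s hs => hp.2.2.1 s (codeTree_subset hs)).injective.injOn

end Miller

theorem IsMiller.exists_subtree_splitSets_subset {p : Set (List ℕ)} (hp : IsMiller p)
    {A : Set ℕ} (hA : ∀ t ∈ SplitNodes p, (sucT p t ∩ A).Infinite) :
    ∃ q, IsMiller q ∧ q ⊆ p ∧ ∀ X ∈ splitSets q, X.Infinite ∧ X ⊆ A := by
  refine ⟨Miller.codeTree hp A, Miller.isMiller_codeTree hA, Miller.codeTree_subset, ?_⟩
  rintro _ ⟨f, hf, rfl⟩
  exact ⟨Miller.Sp_codeTree_infinite hA hf, Miller.Sp_codeTree_subset hf⟩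

theorem IsOmegaSplitting.exists_treeSplits {𝒮 : Set (Set ℕ)} (h𝒮 : IsOmegaSplitting 𝒮)
    {p : Set (List ℕ)} (hp : IsMiller p) : ∃ S ∈ 𝒮, TreeSplits S p := by
  obtain ⟨t, ht, -, hinf⟩ := hp.2.2.2 [] hp.nil_mem
  obtain ⟨e, he⟩ := (Set.to_countable (SplitNodes p)).exists_eq_range ⟨t, ht, hinf⟩
  have he_split : ∀ n, (sucT p (e n)).Infinite := fun n =>
    (show e n ∈ SplitNodes p from he ▸ Set.mem_range_self n).2
  obtain ⟨S, hS, hsplit⟩ := h𝒮 _ he_split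
  refine ⟨S, hS, hp.exists_subtree_splitSets_subset ?_, hp.exists_subtree_splitSets_subset ?_⟩
  all_goals rw [he]; rintro _ ⟨n, rfl⟩
  · exact (hsplit n).1
  · simpa [← Set.compl_eq_univ_sdiff, ← Set.sdiff_eq] using (hsplit n).2

def incSeqTree (X : Set ℕ) : Set (List ℕ) := {s | List.IsChain (· < ·) s ∧ ∀ x ∈ s, x ∈ X}

lemma isMiller_incSeqTree {X : Set ℕ} (hX : X.Infinite) : IsMiller (incSeqTree X) := by
  have htree : IsTree (incSeqTree X) := fun s hs t ht =>
    ⟨List.isChain_iff_pairwise.mpr ((List.isChain_iff_pairwise.mp hs.1).sublist ht.sublist),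
      fun x hx => hs.2 x (ht.sublist.subset hx)⟩
  refine ⟨⟨[], List.isChain_nil, by simp⟩, htree, fun s hs => hs.1, fun s hs => ⟨s, hs,
    List.prefix_refl _, (hX.sdiff (Set.finite_Iic s.sum)).mono ?_⟩⟩
  rintro n ⟨hnX, hn⟩
  refine ⟨List.isChain_append.mpr ⟨hs.1, List.isChain_singleton n, ?_⟩, ?_⟩
  · simp only [List.head?_cons, Option.mem_def, Option.some.injEq]
    rintro x hx _ rfl
    exact (List.le_sum_of_mem (List.mem_of_getLast? hx)).trans_lt (not_le.mp hn)
  · intro x hx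
    rcases List.mem_append.mp hx with hx | hx
    exacts [hs.2 x hx, List.mem_singleton.mp hx ▸ hnX]

lemma infinite_inter_of_splitSets_subset {X B : Set ℕ} {q : Set (List ℕ)} (hq : IsMiller q)
    (hqX : q ⊆ incSeqTree X) (hB : ∀ Y ∈ splitSets q, Y.Infinite ∧ Y ⊆ B) :
    (X ∩ B).Infinite := by
  obtain ⟨f, hf⟩ := hq.exists_branch
  obtain ⟨hinf, hsub⟩ := hB _ ⟨f, hf, rfl⟩
  refine hinf.mono fun m hm => ⟨?_, hsub hm⟩
  obtain ⟨n, -, rfl⟩ := hm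
  exact (hqX (hf (n + 1))).2 (f n) (by simp [res_succ])

theorem IsSplittingFam.of_treeSplits {𝒮 : Set (Set ℕ)}
    (h : ∀ p, IsMiller p → ∃ S ∈ 𝒮, TreeSplits S p) : IsSplittingFam 𝒮 := by
  intro X hX
  obtain ⟨S, hS, ⟨q, hq, hqX, hqS⟩, ⟨q', hq', hq'X, hq'S⟩⟩ := h _ (isMiller_incSeqTree hX)
  refine ⟨S, hS, infinite_inter_of_splitSets_subset hq hqX hqS, ?_⟩
  simpa [Set.sdiff_eq, ← Set.compl_eq_univ_sdiff] using
    infinite_inter_of_splitSets_subset hq' hq'X hq'S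

theorem stmt12_general (𝒮 : Set (Set ℕ)) :
    (IsOmegaSplitting 𝒮 → ∀ p, IsMiller p → ∃ S ∈ 𝒮, TreeSplits S p) ∧
    ((∀ p, IsMiller p → ∃ S ∈ 𝒮, TreeSplits S p) → IsSplittingFam 𝒮) :=
  ⟨fun h𝒮 _ hp => h𝒮.exists_treeSplits hp, IsSplittingFam.of_treeSplits⟩

/-- Every `ω`-splitting family is Miller tree-splitting, and every Miller
tree-splitting family is splitting. -/
theorem stmt12 (𝒮 : Set (Set ℕ)) (h𝒮 : ∀ S ∈ 𝒮, S.Infinite) :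
    (IsOmegaSplitting 𝒮 → ∀ p, IsMiller p → ∃ S ∈ 𝒮, TreeSplits S p) ∧
    ((∀ p, IsMiller p → ∃ S ∈ 𝒮, TreeSplits S p) → IsSplittingFam 𝒮) :=
  stmt12_general 𝒮
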